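/- Let $\omega, \eta \in \mathbb{R}^d$ with $|\omega| = 1$, and suppose there exists $c > 0$ such that $|(\omega + 2\eta)\cdot\omega| \ge c\,|\omega + 2\eta|$. Then for every $z \in \mathbb{R}^d$ with $z \cdot (\omega + 2\eta) = 0$, writing $P z = z - (z\cdot\omega)\omega$, we have the lower bound $\|P z \wedge (\omega + 2\eta)\| \ge |Pz|\,|(\omega + 2\eta)\cdot\omega| \ge c'\,|z|\,|\omega + 2\eta|$ for a constant $c' > 0$ depending only on $c$ and an upper bound for $|\eta|$. -/

import Mathlib

open RealInnerProductSpace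

/-- The magnitude of the wedge product of two vectors:
`‖a ∧ b‖² = ‖a‖²‖b‖² - (a·b)²`. -/
noncomputable def wedgeNorm {d : ℕ} (a b : EuclideanSpace ℝ (Fin d)) : ℝ :=
  Real.sqrt (‖a‖ ^ 2 * ‖b‖ ^ 2 - ⟪a, b⟫ ^ 2)

/-!
Write `Px = x - ⟪x, ω⟫ ω` for the projection onto `ω⊥`. Since `Pz ⊥ ω`, only the `ω⊥` part of
`ξ = ω + 2η` meets `Pz`, and Pythagoras for `ξ` gives `‖Pz‖²‖ξ‖² - ⟪Pz, ξ⟫² ≥ ‖Pz‖²⟪ξ, ω⟫²`.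
For the second bound, `z ⊥ ξ` gives `⟪z, ω⟫⟪ξ, ω⟫ = -⟪Pz, ξ⟫`, so Cauchy–Schwarz and
transversality `m‖ξ‖ ≤ |⟪ξ, ω⟫|` (`m = min c 1`) yield `m |⟪z, ω⟫| ‖ξ‖ ≤ ‖Pz‖ ‖ξ‖`; with
`‖z‖ ≤ |⟪z, ω⟫| + ‖Pz‖` this gives the claim with `c' = m² / 2`.
-/

section UnitVector

variable {E : Type*} [SeminormedAddCommGroup E] [InnerProductSpace ℝ E] {ω : E}

theorem inner_sub_inner_smul_unit_self (hω : ‖ω‖ = 1) (x : E) :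
    ⟪x - ⟪x, ω⟫ • ω, ω⟫ = 0 := by
  rw [inner_sub_left, real_inner_smul_left, real_inner_self_eq_norm_sq, hω]
  ring

theorem inner_eq_inner_sub_inner_smul_of_inner_eq_zero {w : E} (hw : ⟪w, ω⟫ = 0) (x : E) :
    ⟪w, x⟫ = ⟪w, x - ⟪x, ω⟫ • ω⟫ := by
  rw [inner_sub_right, real_inner_smul_right, hw, mul_zero, sub_zero]

theorem norm_sq_eq_inner_unit_sq_add_norm_sq (hω : ‖ω‖ = 1) (x : E) :
    ‖x‖ ^ 2 = ⟪x, ω⟫ ^ 2 + ‖x - ⟪x, ω⟫ • ω‖ ^ 2 := by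
  have hperp : ⟪⟪x, ω⟫ • ω, x - ⟪x, ω⟫ • ω⟫ = 0 := by
    rw [real_inner_smul_left, real_inner_comm (x - ⟪x, ω⟫ • ω), inner_sub_inner_smul_unit_self hω,
      mul_zero]
  conv_lhs => rw [← add_sub_cancel (⟪x, ω⟫ • ω) x]
  rw [norm_add_sq_real, hperp, norm_smul, hω, Real.norm_eq_abs, mul_one, sq_abs]
  ring

theorem norm_sq_mul_inner_unit_sq_add_inner_sq_le (hω : ‖ω‖ = 1) {w : E}
    (hw : ⟪w, ω⟫ = 0) (x : E) :
    ‖w‖ ^ 2 * ⟪x, ω⟫ ^ 2 + ⟪w, x⟫ ^ 2 ≤ ‖w‖ ^ 2 * ‖x‖ ^ 2 := by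
  have hCS : ⟪w, x⟫ ^ 2 ≤ ‖w‖ ^ 2 * ‖x - ⟪x, ω⟫ • ω‖ ^ 2 := by
    rw [inner_eq_inner_sub_inner_smul_of_inner_eq_zero hw, ← sq_abs, ← mul_pow]
    exact pow_le_pow_left₀ (abs_nonneg _) (abs_real_inner_le_norm _ _) 2
  rw [norm_sq_eq_inner_unit_sq_add_norm_sq hω x]
  linarith

theorem abs_inner_mul_inner_le_of_inner_eq_zero {z x : E} (hzx : ⟪z, x⟫ = 0) :
    |⟪z, ω⟫ * ⟪x, ω⟫| ≤ ‖z - ⟪z, ω⟫ • ω‖ * ‖x‖ := by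
  have hsplit : ⟪z, ω⟫ * ⟪x, ω⟫ = -⟪z - ⟪z, ω⟫ • ω, x⟫ := by
    rw [inner_sub_left, real_inner_smul_left, hzx, real_inner_comm x ω]
    ring
  rw [hsplit, abs_neg]
  exact abs_real_inner_le_norm _ _

theorem norm_le_abs_inner_unit_add_norm (hω : ‖ω‖ = 1) (z : E) :
    ‖z‖ ≤ |⟪z, ω⟫| + ‖z - ⟪z, ω⟫ • ω‖ := by
  calc ‖z‖ = ‖⟪z, ω⟫ • ω + (z - ⟪z, ω⟫ • ω)‖ := by rw [add_sub_cancel]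
    _ ≤ ‖⟪z, ω⟫ • ω‖ + ‖z - ⟪z, ω⟫ • ω‖ := norm_add_le _ _
    _ = |⟪z, ω⟫| + ‖z - ⟪z, ω⟫ • ω‖ := by rw [norm_smul, hω, Real.norm_eq_abs, mul_one]

end UnitVector

theorem norm_mul_abs_inner_unit_le_wedgeNorm {d : ℕ} {ω w : EuclideanSpace ℝ (Fin d)}
    (hω : ‖ω‖ = 1) (hw : ⟪w, ω⟫ = 0) (x : EuclideanSpace ℝ (Fin d)) :
    ‖w‖ * |⟪x, ω⟫| ≤ wedgeNorm w x := by
  refine Real.le_sqrt_of_sq_le ?_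
  rw [mul_pow, sq_abs]
  linarith [norm_sq_mul_inner_unit_sq_add_inner_sq_le hω hw x]

theorem wedge_lower_bound_transversality_general
    (c B : ℝ) (hc : 0 < c) :
    ∃ c' : ℝ, 0 < c' ∧
      ∀ (d : ℕ) (ω η z : EuclideanSpace ℝ (Fin d)),
        ‖ω‖ = 1 → ‖η‖ ≤ B →
        c * ‖ω + (2 : ℝ) • η‖ ≤ |⟪ω + (2 : ℝ) • η, ω⟫| →
        ⟪z, ω + (2 : ℝ) • η⟫ = 0 →
        ‖z - ⟪z, ω⟫ • ω‖ * |⟪ω + (2 : ℝ) • η, ω⟫| ≤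
            wedgeNorm (z - ⟪z, ω⟫ • ω) (ω + (2 : ℝ) • η) ∧
        c' * ‖z‖ * ‖ω + (2 : ℝ) • η‖ ≤ ‖z - ⟪z, ω⟫ • ω‖ * |⟪ω + (2 : ℝ) • η, ω⟫| := by
  set m := min c 1
  refine ⟨m ^ 2 / 2, by positivity, fun d ω η z hω _ htrans hz => ?_⟩
  set ξ := ω + (2 : ℝ) • η
  refine ⟨norm_mul_abs_inner_unit_le_wedgeNorm hω (inner_sub_inner_smul_unit_self hω z) ξ, ?_⟩
  have hm0 : 0 < m := lt_min hc one_pos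
  have hm1 : m ≤ 1 := min_le_right c 1
  have hmξ : m * ‖ξ‖ ≤ |⟪ξ, ω⟫| :=
    (mul_le_mul_of_nonneg_right (min_le_left c 1) (norm_nonneg ξ)).trans htrans
  have hzω : |⟪z, ω⟫| * |⟪ξ, ω⟫| ≤ ‖z - ⟪z, ω⟫ • ω‖ * ‖ξ‖ := by
    rw [← abs_mul]; exact abs_inner_mul_inner_le_of_inner_eq_zero hz
  have hz_le := norm_le_abs_inner_unit_add_norm hω z
  nlinarith [mul_le_mul_of_nonneg_left hz_le (by positivity : 0 ≤ m ^ 2 * ‖ξ‖),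
    mul_le_mul_of_nonneg_left hmξ (by positivity : 0 ≤ m * |⟪z, ω⟫|),
    mul_le_mul_of_nonneg_left hmξ (norm_nonneg (z - ⟪z, ω⟫ • ω)),
    mul_nonneg (norm_nonneg (z - ⟪z, ω⟫ • ω)) (abs_nonneg ⟪ξ, ω⟫)]

/-- Under the transversality condition `|(ω+2η)·ω| ≥ c‖ω+2η‖`, for every `z`
orthogonal to `ω+2η`, writing `Pz = z - (z·ω)ω`, we have
`‖Pz ∧ (ω+2η)‖ ≥ ‖Pz‖ |(ω+2η)·ω| ≥ c' ‖z‖ ‖ω+2η‖`, with `c' > 0` depending only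
on `c` and an upper bound `B` for `‖η‖`. -/
theorem wedge_lower_bound_transversality
    (c B : ℝ) (hc : 0 < c) (hB : 0 < B) :
    ∃ c' : ℝ, 0 < c' ∧
      ∀ (d : ℕ) (ω η z : EuclideanSpace ℝ (Fin d)),
        ‖ω‖ = 1 → ‖η‖ ≤ B →
        c * ‖ω + (2 : ℝ) • η‖ ≤ |⟪ω + (2 : ℝ) • η, ω⟫| →
        ⟪z, ω + (2 : ℝ) • η⟫ = 0 →
        ‖z - ⟪z, ω⟫ • ω‖ * |⟪ω + (2 : ℝ) • η, ω⟫| ≤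
            wedgeNorm (z - ⟪z, ω⟫ • ω) (ω + (2 : ℝ) • η) ∧
        c' * ‖z‖ * ‖ω + (2 : ℝ) • η‖ ≤ ‖z - ⟪z, ω⟫ • ω‖ * |⟪ω + (2 : ℝ) • η, ω⟫| :=
  wedge_lower_bound_transversality_general c B hc
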